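/- Let n and r be positive integers. Then the polynomial ∑_{k=0}^{n-1} q^{r(n-k)^2+(r-1)k} · [n+k choose k]_q^{2r} · [n-1 choose k]_q^{2r} in ℤ[q] is divisible by the q-integer [n] = 1 + q + ... + q^{n-1}. -/

import Mathlib

open Finset Polynomial

/-- The variable `q` of the field of rational functions `ℚ(q)`. -/
noncomputable def q : RatFunc ℚ := RatFunc.X

/-- The `q`-shifted factorial `(q;q)_m = ∏_{i=1}^{m} (1 - q^i)` as an element of `ℚ(q)`. -/
noncomputable def qPoch (m : ℕ) : RatFunc ℚ := ∏ i ∈ Finset.range m, (1 - q ^ (i + 1))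

/-- The Gaussian `q`-binomial coefficient `[m choose k]_q`, viewed in `ℚ(q)`. -/
noncomputable def qbinom (m k : ℕ) : RatFunc ℚ :=
  if k ≤ m then qPoch m / (qPoch k * qPoch (m - k)) else 0

/-- The `q`-integer `[n] = 1 + q + ⋯ + q^{n-1}` as a polynomial in `ℚ[q]`. -/
noncomputable def qint (n : ℕ) : Polynomial ℚ := ∑ i ∈ Finset.range n, Polynomial.X ^ i

/-- The `q`-integer `[n]` viewed in `ℚ(q)`. -/
noncomputable def qintR (n : ℕ) : RatFunc ℚ :=
  algebraMap (Polynomial ℚ) (RatFunc ℚ) (qint n)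

/-- `A ≡ B (mod P)` for rational functions `A, B ∈ ℚ(q)` and a polynomial `P`:
`A - B` can be written as a fraction `a / b` of polynomials whose numerator `a` is
divisible by `P` and whose denominator `b` is coprime to `P`. -/
def ratModEq (P : Polynomial ℚ) (A B : RatFunc ℚ) : Prop :=
  ∃ a b : Polynomial ℚ, IsCoprime b P ∧ P ∣ a ∧
    A - B = algebraMap (Polynomial ℚ) (RatFunc ℚ) a / algebraMap (Polynomial ℚ) (RatFunc ℚ) b

noncomputable def gb : ℕ → ℕ → Polynomial ℤ
  | _, 0 => 1
  | 0, _+1 => 0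
  | m+1, k+1 => gb m k + X^(k+1) * gb m (k+1)

lemma gb_zero (m : ℕ) : gb m 0 = 1 := by cases m <;> rfl

lemma gb_eq_zero : ∀ {m k : ℕ}, m < k → gb m k = 0
  | 0, k+1, _ => rfl
  | m+1, k+1, h => by
      rw [gb, gb_eq_zero (by omega : m < k), gb_eq_zero (by omega : m < k+1)]
      simp

lemma gb_self : ∀ m, gb m m = 1
  | 0 => rfl
  | m+1 => by
      rw [gb, gb_self m, gb_eq_zero (Nat.lt_succ_self m), mul_zero, add_zero]

/-- The fundamental identity `[m,k] ∏_{i<k}(1-X^{i+1}) = ∏_{i<k}(1-X^{m-i})`. -/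
lemma gb_mul_prod : ∀ m k : ℕ, k ≤ m →
    gb m k * ∏ i ∈ range k, (1 - (X:Polynomial ℤ)^(i+1)) = ∏ i ∈ range k, (1 - (X:Polynomial ℤ)^(m-i))
  | m, 0, _ => by simp [gb_zero]
  | 0, k+1, h => by omega
  | m+1, k+1, h => by
      rcases Nat.lt_or_ge k m with hk | hk
      · have ih1 := gb_mul_prod m k (by omega)
        have ih2 := gb_mul_prod m (k+1) (by omega)
        have hP : ∏ i ∈ range (k+1), (1 - (X:Polynomial ℤ)^(i+1))
            = (∏ i ∈ range k, (1 - (X:Polynomial ℤ)^(i+1))) * (1 - X^(k+1)) := prod_range_succ _ _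
        have hR2 : ∏ i ∈ range (k+1), (1 - (X:Polynomial ℤ)^(m-i))
            = (∏ i ∈ range k, (1 - (X:Polynomial ℤ)^(m-i))) * (1 - X^(m-k)) := prod_range_succ _ _
        have hrhs : ∏ i ∈ range (k+1), (1 - (X:Polynomial ℤ)^(m+1-i))
            = (∏ i ∈ range k, (1 - (X:Polynomial ℤ)^(m-i))) * (1 - X^(m+1)) := by
          rw [prod_range_succ']
          congr 1
          · apply prod_congr rfl; intro i hi; congr 2; omega
        rw [gb, hrhs, hP, add_mul]
        have t1 : gb m k * ((∏ i ∈ range k, (1 - (X:Polynomial ℤ)^(i+1))) * (1 - X^(k+1)))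
            = (∏ i ∈ range k, (1 - (X:Polynomial ℤ)^(m-i))) * (1 - X^(k+1)) := by
          rw [← mul_assoc, ih1]
        have t2 : X^(k+1) * gb m (k+1) * ((∏ i ∈ range k, (1 - (X:Polynomial ℤ)^(i+1))) * (1 - X^(k+1)))
            = X^(k+1) * ((∏ i ∈ range k, (1 - (X:Polynomial ℤ)^(m-i))) * (1 - X^(m-k))) := by
          rw [mul_assoc, ← hP, ih2, hR2]
        rw [t1, t2]
        have hpow : (X:Polynomial ℤ)^(k+1) * X^(m-k) = X^(m+1) := by
          rw [← pow_add]; congr 1; omega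
        linear_combination (-(∏ i ∈ range k, (1 - (X:Polynomial ℤ)^(m-i)))) * hpow
      · have hkm : k = m := le_antisymm (by omega) hk
        subst hkm
        rw [gb, gb_self, gb_eq_zero (Nat.lt_succ_self k), mul_zero, add_zero, one_mul]
        rw [show (∏ i ∈ range (k+1), (1 - (X:Polynomial ℤ)^(k+1-i)))
            = ∏ i ∈ range (k+1), (1 - (X:Polynomial ℤ)^((k+1) - 1 - i + 1)) from
          prod_congr rfl (fun i hi => by rw [mem_range] at hi; congr 2; omega)]
        exact (prod_range_reflect (fun i => 1 - (X:Polynomial ℤ)^(i+1)) (k+1)).symm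

/-- image of `gb` in `ℚ[X]`. -/
noncomputable def gbQ (m k : ℕ) : Polynomial ℚ := (gb m k).map (Int.castRingHom ℚ)

noncomputable def φ : Polynomial ℚ →+* RatFunc ℚ := algebraMap _ _

lemma phi_inj : Function.Injective φ := RatFunc.algebraMap_injective ℚ

lemma gbQ_mul_prod (m k : ℕ) (h : k ≤ m) :
    gbQ m k * ∏ i ∈ range k, (1 - (X:Polynomial ℚ)^(i+1)) = ∏ i ∈ range k, (1 - (X:Polynomial ℚ)^(m-i)) := by
  have := congrArg (Polynomial.map (Int.castRingHom ℚ)) (gb_mul_prod m k h)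
  simpa [Polynomial.map_mul, Polynomial.map_prod, Polynomial.map_pow, gbQ] using this

lemma qPoch_eq (m : ℕ) : qPoch m = φ (∏ i ∈ range m, (1 - (X:Polynomial ℚ)^(i+1))) := by
  simp only [qPoch, map_prod, map_sub, map_one, map_pow, φ, RatFunc.algebraMap_X, q]

lemma one_sub_X_pow_ne_zero (s : ℕ) (hs : 0 < s) : (1 - (X:Polynomial ℚ)^s) ≠ 0 := by
  intro hc
  have := congrArg (Polynomial.eval 0) hc
  simp only [Polynomial.eval_sub, Polynomial.eval_one, Polynomial.eval_pow, Polynomial.eval_X, Polynomial.eval_zero, zero_pow hs.ne'] at this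
  norm_num at this

lemma qPoch_ne_zero (m : ℕ) : qPoch m ≠ 0 := by
  rw [qPoch_eq]
  apply RatFunc.algebraMap_ne_zero
  exact prod_ne_zero_iff.mpr fun i _ => one_sub_X_pow_ne_zero _ (Nat.succ_pos i)

lemma qPoch_split (m k : ℕ) (h : k ≤ m) :
    (∏ i ∈ range m, (1 - (X:Polynomial ℚ)^(i+1)))
      = (∏ i ∈ range (m-k), (1 - (X:Polynomial ℚ)^(i+1))) * ∏ i ∈ range k, (1 - (X:Polynomial ℚ)^(m-i)) := by
  have h1 : m = (m-k) + k := by omega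
  rw [show (∏ i ∈ range m, (1 - (X:Polynomial ℚ)^(i+1)))
      = ∏ i ∈ range ((m-k)+k), (1 - (X:Polynomial ℚ)^(i+1)) by rw [← h1]]
  rw [prod_range_add]
  congr 1
  rw [show (∏ i ∈ range k, (1 - (X:Polynomial ℚ)^(m-i)))
      = ∏ i ∈ range k, (1 - (X:Polynomial ℚ)^(m-(k-1-i))) from
    (prod_range_reflect (fun i => 1 - (X:Polynomial ℚ)^(m-i)) k).symm]
  apply prod_congr rfl; intro i hi; rw [mem_range] at hi; congr 2; omega

lemma qbinom_eq (m k : ℕ) (h : k ≤ m) : qbinom m k = φ (gbQ m k) := by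
  rw [qbinom, if_pos h]
  rw [div_eq_iff (by exact mul_ne_zero (qPoch_ne_zero k) (qPoch_ne_zero (m-k)))]
  rw [qPoch_eq m, qPoch_eq k, qPoch_eq (m-k), qPoch_split m k h]
  rw [← map_mul, ← map_mul]
  refine congrArg φ ?_
  rw [← gbQ_mul_prod m k h]
  ring


lemma arith_lt1 (e t l j : ℕ) (hj : j ≤ e) (h1 : t*(e+1) + e < l*(e+1)+j) : t < l := by nlinarith
lemma arith_lt2 (e t l j : ℕ) (ht : t < l) : t*(e+1) + e < l*(e+1)+j := by nlinarith

lemma dvd_succ_iff_mod (d i : ℕ) (hd : 0 < d) : d ∣ (i+1) ↔ i % d = d - 1 := by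
  constructor
  · rintro ⟨e, he⟩
    have he' : e ≠ 0 := by rintro rfl; omega
    obtain ⟨e', rfl⟩ := Nat.exists_eq_succ_of_ne_zero he'
    have he2 : i + 1 = d*e' + d := by rw [he, Nat.mul_succ]
    have hi : i = d*e' + (d-1) := by omega
    rw [hi, Nat.mul_add_mod, Nat.mod_eq_of_lt (by omega)]
  · intro h
    refine ⟨i/d + 1, ?_⟩
    have h2 := Nat.div_add_mod i d
    rw [Nat.mul_add, Nat.mul_one]
    omega

/-- position of the `d ∣ w i` indices: `i % d = d-1` characterization implies the
factorization of `∏ (1 - X^{w i})` extracting `(1-X^d)^l`. -/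
lemma fact_split (d k l j : ℕ) (hd : 1 < d) (hk : k = l*d + j) (hj : j < d)
    (w : ℕ → ℕ) (c : ℕ → ℕ)
    (hw : ∀ t, t < l → w (t*d + (d-1)) = c t * d)
    (hdvd : ∀ i, i < k → (d ∣ w i ↔ i % d = d - 1)) :
    ∏ i ∈ range k, (1 - (X:Polynomial ℂ)^(w i))
      = (1 - (X:Polynomial ℂ)^d)^l
        * (∏ i ∈ (range k).filter (fun i => ¬ d ∣ w i), (1 - (X:Polynomial ℂ)^(w i)))
        * ∏ t ∈ range l, (∑ u ∈ range (c t), (X:Polynomial ℂ)^(d*u)) := by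
  obtain ⟨e, rfl⟩ : ∃ e, d = e + 1 := ⟨d-1, by omega⟩
  classical
  simp only [Nat.add_sub_cancel] at hw hdvd
  rw [← prod_filter_mul_prod_filter_not (range k) (fun i => (e+1) ∣ w i)]
  have hdiv : ∏ i ∈ (range k).filter (fun i => (e+1) ∣ w i), (1 - (X:Polynomial ℂ)^(w i))
      = ∏ t ∈ range l, (1 - (X:Polynomial ℂ)^(c t * (e+1))) := by
    refine Finset.prod_nbij' (fun i => i / (e+1)) (fun t => t*(e+1) + e) ?_ ?_ ?_ ?_ ?_
    · intro a ha
      rw [mem_filter, mem_range] at ha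
      have hmod : a % (e+1) = e := (hdvd a ha.1).mp ha.2
      have h2 := Nat.div_add_mod a (e+1)
      rw [mem_range]
      refine arith_lt1 e (a/(e+1)) l j (by omega) ?_
      have : (a/(e+1))*(e+1) + e = a := by rw [Nat.mul_comm]; omega
      omega
    · intro t ht
      rw [mem_range] at ht
      rw [mem_filter, mem_range]
      constructor
      · rw [hk]; exact arith_lt2 e t l j ht
      · rw [hw t ht]; exact Dvd.intro_left _ rfl
    · intro a ha
      rw [mem_filter, mem_range] at ha
      have hmod : a % (e+1) = e := (hdvd a ha.1).mp ha.2
      have h2 := Nat.div_add_mod a (e+1)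
      rw [Nat.mul_comm]; omega
    · intro t ht
      rw [mem_range] at ht
      rw [Nat.mul_comm, Nat.mul_add_div (by omega), Nat.div_eq_of_lt (by omega)]
      omega
    · intro a ha
      rw [mem_filter, mem_range] at ha
      have hmod : a % (e+1) = e := (hdvd a ha.1).mp ha.2
      have h2 := Nat.div_add_mod a (e+1)
      have hae : (a/(e+1))*(e+1) + e = a := by rw [Nat.mul_comm]; omega
      have hq : a/(e+1) < l := arith_lt1 e (a/(e+1)) l j (by omega) (by omega)
      rw [← hw _ hq, hae]
  rw [hdiv]
  have hgeom : ∀ t ∈ range l, (1 - (X:Polynomial ℂ)^(c t * (e+1)))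
      = (1 - (X:Polynomial ℂ)^(e+1)) * (∑ u ∈ range (c t), (X:Polynomial ℂ)^((e+1)*u)) := by
    intro t _
    have h1 : ∀ u, (X:Polynomial ℂ)^((e+1)*u) = ((X:Polynomial ℂ)^(e+1))^u := fun u => pow_mul _ _ _
    calc 1 - (X:Polynomial ℂ)^(c t * (e+1))
        = 1 - ((X:Polynomial ℂ)^(e+1))^(c t) := by rw [← pow_mul, Nat.mul_comm]
      _ = -((∑ u ∈ range (c t), ((X:Polynomial ℂ)^(e+1))^u) * ((X:Polynomial ℂ)^(e+1) - 1)) := by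
          rw [geom_sum_mul]; ring
      _ = (1 - (X:Polynomial ℂ)^(e+1)) * (∑ u ∈ range (c t), (X:Polynomial ℂ)^((e+1)*u)) := by
          simp only [h1]; ring
  rw [prod_congr rfl hgeom, prod_mul_distrib, prod_const, card_range]
  ring

noncomputable def gbC (m k : ℕ) : Polynomial ℂ := (gb m k).map (Int.castRingHom ℂ)

/-- the product of `1 - X^{i+1}` over non-multiples. -/
noncomputable def ndP (d k : ℕ) : Polynomial ℂ :=
  ∏ i ∈ (range k).filter (fun i => ¬ d ∣ (i+1)), (1 - (X:Polynomial ℂ)^(i+1))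

lemma one_sub_X_pow_ne_zero' (s : ℕ) (hs : 0 < s) : (1 - (X:Polynomial ℂ)^s) ≠ 0 := by
  intro hc
  have := congrArg (Polynomial.eval 0) hc
  simp only [Polynomial.eval_sub, Polynomial.eval_one, Polynomial.eval_pow, Polynomial.eval_X,
    Polynomial.eval_zero, zero_pow hs.ne'] at this
  norm_num at this

lemma gbC_mul_prod (m k : ℕ) (h : k ≤ m) :
    gbC m k * ∏ i ∈ range k, (1 - (X:Polynomial ℂ)^(i+1)) = ∏ i ∈ range k, (1 - (X:Polynomial ℂ)^(m-i)) := by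
  have := congrArg (Polynomial.map (Int.castRingHom ℂ)) (gb_mul_prod m k h)
  simpa [Polynomial.map_mul, Polynomial.map_prod, Polynomial.map_pow, gbC] using this

/-- Case A: `gb (N*d+k) k` times `(1-X^d)^l * ndP * ∏ geom(t+1)` equals the other side. -/
lemma caseA_poly (d N k l j : ℕ) (hd : 1 < d) (hk : k = l*d + j) (hj : j < d) (hkn : k < N*d) :
    gbC (N*d + k) k * (ndP d k * ∏ t ∈ range l, (∑ u ∈ range (t+1), (X:Polynomial ℂ)^(d*u)))
      = (∏ i ∈ (range k).filter (fun i => ¬ d ∣ (i+1)), (1 - (X:Polynomial ℂ)^(N*d+i+1)))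
        * ∏ t ∈ range l, (∑ u ∈ range (N+t+1), (X:Polynomial ℂ)^(d*u)) := by
  have hd0 : 0 < d := by omega
  have h0 := gbC_mul_prod (N*d + k) k (Nat.le_add_left k (N*d))
  -- reflect the RHS
  have hrefl : ∏ i ∈ range k, (1 - (X:Polynomial ℂ)^(N*d+k-i))
      = ∏ i ∈ range k, (1 - (X:Polynomial ℂ)^(N*d+i+1)) := by
    rw [← prod_range_reflect (fun i => 1 - (X:Polynomial ℂ)^(N*d+k-i)) k]
    apply prod_congr rfl; intro i hi; rw [mem_range] at hi; congr 2; omega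
  rw [hrefl] at h0
  -- split LHS product
  have hsplit1 := fact_split d k l j hd hk hj (fun i => i+1) (fun t => t+1)
    (fun t ht => by
      show t*d+(d-1)+1 = (t+1)*d
      have h1 : (t+1)*d = t*d+d := by ring
      omega)
    (fun i hi => dvd_succ_iff_mod d i hd0)
  -- split RHS product
  have hsplit2 := fact_split d k l j hd hk hj (fun i => N*d+i+1) (fun t => N+t+1)
    (fun t ht => by
      show N*d+(t*d+(d-1))+1 = (N+t+1)*d
      have h2 : (N+t+1)*d = N*d + t*d + d := by ring
      omega)
    (fun i hi => by
      show d ∣ N*d+i+1 ↔ i % d = d - 1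
      rw [show N*d+i+1 = N*d + (i+1) by omega]
      rw [Nat.dvd_add_right (Dvd.intro_left N rfl)]
      exact dvd_succ_iff_mod d i hd0)
  rw [hsplit1, hsplit2] at h0
  -- the nondiv filter for w2 equals that for (i+1)
  have hfilter : (range k).filter (fun i => ¬ d ∣ (N*d+i+1)) = (range k).filter (fun i => ¬ d ∣ (i+1)) := by
    apply filter_congr
    intro i hi
    rw [show N*d+i+1 = N*d + (i+1) by omega, Nat.dvd_add_right (Dvd.intro_left N rfl)]
  rw [hfilter] at h0
  have hne : ((1 : Polynomial ℂ) - X^d)^l ≠ 0 := pow_ne_zero _ (one_sub_X_pow_ne_zero' d hd0)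
  apply mul_left_cancel₀ hne
  rw [show ((1:Polynomial ℂ) - X^d)^l * (gbC (N*d + k) k * (ndP d k * ∏ t ∈ range l, (∑ u ∈ range (t+1), (X:Polynomial ℂ)^(d*u))))
      = gbC (N*d + k) k * (((1:Polynomial ℂ) - X^d)^l * ndP d k * ∏ t ∈ range l, (∑ u ∈ range (t+1), (X:Polynomial ℂ)^(d*u))) by ring]
  rw [ndP] at *
  rw [h0]
  ring

lemma caseC_poly (d N k l j : ℕ) (hd : 1 < d) (hk : k = l*d + j) (hj : j < d) (hkn : k < N*d) :
    gbC (N*d - 1) k * (ndP d k * ∏ t ∈ range l, (∑ u ∈ range (t+1), (X:Polynomial ℂ)^(d*u)))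
      = (∏ i ∈ (range k).filter (fun i => ¬ d ∣ (i+1)), (1 - (X:Polynomial ℂ)^(N*d-1-i)))
        * ∏ t ∈ range l, (∑ u ∈ range (N-1-t), (X:Polynomial ℂ)^(d*u)) := by
  have hd0 : 0 < d := by omega
  have hlN : l < N := by
    have h1 : l*d ≤ k := by omega
    exact Nat.lt_of_mul_lt_mul_right (show l*d < N*d by omega)
  have hNd : d ∣ N*d := ⟨N, Nat.mul_comm N d⟩
  have hdvdC : ∀ i, i < k → (d ∣ N*d-1-i ↔ i % d = d - 1) := by
    intro i hi
    have h4 : N*d-1-i = N*d - (i+1) := by omega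
    rw [h4]
    constructor
    · intro h
      have h5 := Nat.dvd_sub hNd h
      rw [Nat.sub_sub_self (by omega : i+1 ≤ N*d)] at h5
      exact (dvd_succ_iff_mod d i hd0).mp h5
    · intro h
      exact Nat.dvd_sub hNd ((dvd_succ_iff_mod d i hd0).mpr h)
  have h0 := gbC_mul_prod (N*d-1) k (by omega)
  have hsplit1 := fact_split d k l j hd hk hj (fun i => i+1) (fun t => t+1)
    (fun t ht => by
      show t*d+(d-1)+1 = (t+1)*d
      have h1 : (t+1)*d = t*d+d := by ring
      omega)
    (fun i hi => dvd_succ_iff_mod d i hd0)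
  have hsplit2 := fact_split d k l j hd hk hj (fun i => N*d-1-i) (fun t => N-1-t)
    (fun t ht => by
      show N*d-1-(t*d+(d-1)) = (N-1-t)*d
      have h2 : (t+1)*d = t*d+d := by ring
      have h3 : (t+1)*d ≤ N*d := Nat.mul_le_mul_right d (by omega)
      rw [show N-1-t = N-(t+1) by omega, Nat.sub_mul]
      omega)
    hdvdC
  rw [hsplit1, hsplit2] at h0
  have hfilter : (range k).filter (fun i => ¬ d ∣ (N*d-1-i)) = (range k).filter (fun i => ¬ d ∣ (i+1)) := by
    apply filter_congr
    intro i hi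
    rw [mem_range] at hi
    rw [hdvdC i hi, dvd_succ_iff_mod d i hd0]
  rw [hfilter] at h0
  have hne : ((1 : Polynomial ℂ) - X^d)^l ≠ 0 := pow_ne_zero _ (one_sub_X_pow_ne_zero' d hd0)
  apply mul_left_cancel₀ hne
  rw [show ((1:Polynomial ℂ) - X^d)^l * (gbC (N*d - 1) k * (ndP d k * ∏ t ∈ range l, (∑ u ∈ range (t+1), (X:Polynomial ℂ)^(d*u))))
      = gbC (N*d - 1) k * (((1:Polynomial ℂ) - X^d)^l * ndP d k * ∏ t ∈ range l, (∑ u ∈ range (t+1), (X:Polynomial ℂ)^(d*u))) by ring]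
  rw [ndP] at *
  rw [h0]
  ring

/-- value of `gb` related quantities at a primitive root of unity -/
noncomputable def nd (ζ : ℂ) (d k : ℕ) : ℂ :=
  ∏ i ∈ (range k).filter (fun i => ¬ d ∣ (i+1)), (1 - ζ^(i+1))

lemma eval_geom (ζ : ℂ) (d : ℕ) (hζd : ζ^d = 1) (s : ℕ) :
    Polynomial.eval ζ (∑ u ∈ range s, (X:Polynomial ℂ)^(d*u)) = (s:ℂ) := by
  rw [Polynomial.eval_finset_sum]
  have : ∀ u ∈ range s, Polynomial.eval ζ ((X:Polynomial ℂ)^(d*u)) = 1 := by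
    intro u _
    rw [Polynomial.eval_pow, Polynomial.eval_X, pow_mul, hζd, one_pow]
  rw [sum_congr rfl this, sum_const, card_range, nsmul_eq_mul, mul_one]

lemma eval_ndP (ζ : ℂ) (d k : ℕ) : Polynomial.eval ζ (ndP d k) = nd ζ d k := by
  rw [ndP, nd, Polynomial.eval_prod]
  exact prod_congr rfl fun i _ => by
    rw [Polynomial.eval_sub, Polynomial.eval_one, Polynomial.eval_pow, Polynomial.eval_X]

lemma evalA (ζ : ℂ) (d N k l j : ℕ) (hd : 1 < d) (hζ : IsPrimitiveRoot ζ d)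
    (hk : k = l*d + j) (hj : j < d) (hkn : k < N*d) :
    Polynomial.eval ζ (gbC (N*d + k) k) * (nd ζ d k * ∏ t ∈ range l, ((t+1 : ℕ):ℂ))
      = nd ζ d k * ∏ t ∈ range l, ((N+t+1 : ℕ):ℂ) := by
  have hζd : ζ^d = 1 := hζ.pow_eq_one
  have hζn : ζ^(N*d) = 1 := by rw [pow_mul', hζd, one_pow]
  have h := congrArg (Polynomial.eval ζ) (caseA_poly d N k l j hd hk hj hkn)
  simp only [Polynomial.eval_mul, Polynomial.eval_prod, Polynomial.eval_sub,
    Polynomial.eval_one, Polynomial.eval_pow, Polynomial.eval_X, eval_ndP] at h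
  rw [prod_congr rfl (fun t (_ : t ∈ range l) => eval_geom ζ d hζd (t+1)),
      prod_congr rfl (fun t (_ : t ∈ range l) => eval_geom ζ d hζd (N+t+1))] at h
  have hconv : (∏ i ∈ (range k).filter (fun i => ¬ d ∣ (i+1)), (1 - ζ^(N*d+i+1))) = nd ζ d k := by
    rw [nd]
    refine prod_congr rfl fun i hi => ?_
    rw [show N*d+i+1 = N*d + (i+1) by omega, pow_add, hζn, one_mul]
  rw [hconv] at h
  exact h

lemma evalC (ζ : ℂ) (d N k l j : ℕ) (hd : 1 < d) (hζ : IsPrimitiveRoot ζ d)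
    (hk : k = l*d + j) (hj : j < d) (hkn : k < N*d) :
    Polynomial.eval ζ (gbC (N*d - 1) k) * (nd ζ d k * ∏ t ∈ range l, ((t+1 : ℕ):ℂ))
      = (∏ i ∈ (range k).filter (fun i => ¬ d ∣ (i+1)), (-(ζ^(N*d-1-i))))
          * nd ζ d k * ∏ t ∈ range l, ((N-1-t : ℕ):ℂ) := by
  have hζd : ζ^d = 1 := hζ.pow_eq_one
  have hζn : ζ^(N*d) = 1 := by rw [pow_mul', hζd, one_pow]
  have h := congrArg (Polynomial.eval ζ) (caseC_poly d N k l j hd hk hj hkn)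
  simp only [Polynomial.eval_mul, Polynomial.eval_prod, Polynomial.eval_sub,
    Polynomial.eval_one, Polynomial.eval_pow, Polynomial.eval_X, eval_ndP] at h
  rw [prod_congr rfl (fun t (_ : t ∈ range l) => eval_geom ζ d hζd (t+1)),
      prod_congr rfl (fun t (_ : t ∈ range l) => eval_geom ζ d hζd (N-1-t))] at h
  have hconv : (∏ i ∈ (range k).filter (fun i => ¬ d ∣ (i+1)), (1 - ζ^(N*d-1-i)))
      = (∏ i ∈ (range k).filter (fun i => ¬ d ∣ (i+1)), (-(ζ^(N*d-1-i)))) * nd ζ d k := by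
    rw [nd, ← prod_mul_distrib]
    refine prod_congr rfl fun i hi => ?_
    rw [mem_filter, mem_range] at hi
    have hpow : ζ^(N*d-1-i) * ζ^(i+1) = 1 := by
      rw [← pow_add, show N*d-1-i + (i+1) = N*d by omega, hζn]
    linear_combination -hpow
  rw [hconv] at h
  rw [h]

section
variable (N d r : ℕ)

/-- the coefficient depending only on the block index -/
noncomputable def Acoef (l : ℕ) : ℂ :=
  (∏ t ∈ range l, ((N+t+1 : ℕ):ℂ))^(2*r) * (∏ t ∈ range l, ((N-1-t : ℕ):ℂ))^(2*r)
    * (((∏ t ∈ range l, ((t+1 : ℕ):ℂ))^(2*r))⁻¹ * ((∏ t ∈ range l, ((t+1 : ℕ):ℂ))^(2*r))⁻¹)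

end

lemma sum_block {M : Type*} [AddCommMonoid M] (f : ℕ → M) (N d : ℕ) :
    ∑ k ∈ range (N*d), f k = ∑ l ∈ range N, ∑ j ∈ range d, f (l*d+j) := by
  induction N with
  | zero => simp
  | succ N ih =>
      rw [show (N+1)*d = N*d + d by ring, sum_range_add, ih, sum_range_succ]

/-- the main per-term computation -/
lemma term_eq (ζ : ℂ) (d N r k : ℕ) (hd : 1 < d) (hζ : IsPrimitiveRoot ζ d)
    (hr : 0 < r) (hkn : k < N*d) :
    (ζ ^ (r*(N*d-k)^2 + (r-1)*k))
        * (Polynomial.eval ζ (gbC (N*d + k) k))^(2*r)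
        * (Polynomial.eval ζ (gbC (N*d - 1) k))^(2*r)
      = Acoef N r (k/d) * (ζ^(k % d))⁻¹ := by
  classical
  have hd0 : 0 < d := by omega
  set n := N*d with hn
  set l := k / d with hl
  set j := k % d with hj
  have hk : k = l*d + j := by rw [hl, hj, Nat.div_add_mod']
  have hjd : j < d := Nat.mod_lt _ hd0
  -- nonvanishing
  have hζne : ζ ≠ 0 := fun hc => by
    have := hζ.pow_eq_one; rw [hc, zero_pow (by omega : d ≠ 0)] at this; norm_num at this
  have ndne : nd ζ d k ≠ 0 := by
    rw [nd, prod_ne_zero_iff]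
    intro i hi
    rw [mem_filter] at hi
    intro hc
    have : ζ^(i+1) = 1 := by linear_combination -hc
    exact hi.2 ((hζ.pow_eq_one_iff_dvd (i+1)).mp this)
  have flne : (∏ t ∈ range l, ((t+1 : ℕ):ℂ)) ≠ 0 := by
    rw [prod_ne_zero_iff]
    intro t _
    simpa using Nat.cast_add_one_ne_zero t
  -- the A and C values
  have hA : Polynomial.eval ζ (gbC (n + k) k)
      = nd ζ d k * (∏ t ∈ range l, ((N+t+1 : ℕ):ℂ)) * (nd ζ d k * ∏ t ∈ range l, ((t+1 : ℕ):ℂ))⁻¹ := by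
    rw [eq_mul_inv_iff_mul_eq₀ (mul_ne_zero ndne flne)]
    have := evalA ζ d N k l j hd hζ hk hjd hkn
    rw [← hn] at this
    exact this
  have hC : Polynomial.eval ζ (gbC (n - 1) k)
      = (∏ i ∈ (range k).filter (fun i => ¬ d ∣ (i+1)), (-(ζ^(n-1-i))))
          * nd ζ d k * (∏ t ∈ range l, ((N-1-t : ℕ):ℂ)) * (nd ζ d k * ∏ t ∈ range l, ((t+1 : ℕ):ℂ))⁻¹ := by
    rw [eq_mul_inv_iff_mul_eq₀ (mul_ne_zero ndne flne)]
    have := evalC ζ d N k l j hd hζ hk hjd hkn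
    rw [← hn] at this
    exact this
  -- the sign-power of the neg product
  have hneg : (∏ i ∈ (range k).filter (fun i => ¬ d ∣ (i+1)), (-(ζ^(n-1-i))))^(2*r)
      = ζ ^ (∑ i ∈ (range k).filter (fun i => ¬ d ∣ (i+1)), (n-1-i)*(2*r)) := by
    have hstep : ∀ i ∈ (range k).filter (fun i => ¬ d ∣ (i+1)),
        (-(ζ^(n-1-i)))^(2*r) = ζ^((n-1-i)*(2*r)) := by
      intro i _
      rw [Even.neg_pow (even_two_mul r), ← pow_mul]
    calc (∏ i ∈ (range k).filter (fun i => ¬ d ∣ (i+1)), (-(ζ^(n-1-i))))^(2*r)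
        = ∏ i ∈ (range k).filter (fun i => ¬ d ∣ (i+1)), (-(ζ^(n-1-i)))^(2*r) :=
          (prod_pow _ _ _).symm
      _ = ∏ i ∈ (range k).filter (fun i => ¬ d ∣ (i+1)), ζ^((n-1-i)*(2*r)) :=
          prod_congr rfl hstep
      _ = ζ ^ (∑ i ∈ (range k).filter (fun i => ¬ d ∣ (i+1)), (n-1-i)*(2*r)) :=
          prod_pow_eq_pow_sum _ _ _
  -- the exponent bookkeeping
  set Sig := ∑ i ∈ (range k).filter (fun i => ¬ d ∣ (i+1)), (n-1-i)*(2*r) with hS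
  have hMain : (r*(n-k)^2 + (r-1)*k) + (∑ i ∈ range k, (n-1-i)*(2*r)) + k = r * n^2 := by
    have hTT : 2 * (∑ i ∈ range k, (n-1-i)) = k * (2*n-1-k) := by
      rw [two_mul]
      nth_rewrite 1 [← sum_range_reflect]
      rw [← sum_add_distrib]
      rw [sum_congr rfl (fun i hi => by
        rw [mem_range] at hi
        omega : ∀ i ∈ range k, (n-1-(k-1-i)) + (n-1-i) = 2*n-1-k)]
      rw [sum_const, card_range, smul_eq_mul]
    have hsum2 : ∑ i ∈ range k, (n-1-i)*(2*r) = (∑ i ∈ range k, (n-1-i)) * (2*r) :=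
      (sum_mul _ _ _).symm
    rw [hsum2]
    obtain ⟨a, ha⟩ : ∃ a, n = k + a + 1 := ⟨n-k-1, by omega⟩
    obtain ⟨s, rfl⟩ : ∃ s, r = s + 1 := ⟨r-1, by omega⟩
    rw [ha] at hTT ⊢
    rw [show (k+a+1)-k = a+1 by omega, show (s+1)-1 = s by omega,
      show 2*(k+a+1)-1-k = k+2*a+1 by omega] at *
    zify at hTT ⊢
    linear_combination ((s:ℤ)+1) * hTT
  have hsplitS := sum_filter_add_sum_filter_not (range k) (fun i => ¬ d ∣ (i+1))
      (fun i => (n-1-i)*(2*r))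
  have hSc : d ∣ ∑ i ∈ (range k).filter (fun i => ¬ ¬ d ∣ (i+1)), (n-1-i)*(2*r) := by
    apply dvd_sum
    intro i hi
    rw [mem_filter, not_not, mem_range] at hi
    apply dvd_mul_of_dvd_left
    have h4 : n-1-i = n - (i+1) := by omega
    rw [h4]
    exact Nat.dvd_sub ⟨N, Nat.mul_comm N d⟩ hi.2
  obtain ⟨c1, hc1⟩ := hSc
  have hexp : Sig + (r*(n-k)^2 + (r-1)*k) + j + (d*c1 + l*d) = r * n^2 := by
    have h5 : Sig + d*c1 = ∑ i ∈ range k, (n-1-i)*(2*r) := by rw [hS, ← hc1]; exact hsplitS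
    omega
  have hkey : ζ ^ (r*(n-k)^2 + (r-1)*k) * ζ ^ Sig = (ζ^j)⁻¹ := by
    apply eq_inv_of_mul_eq_one_left
    have h6 : ζ ^ (r*(n-k)^2 + (r-1)*k) * ζ ^ Sig * ζ ^ j * (ζ^(d*c1) * ζ^(l*d)) = ζ ^ (r*n^2) := by
      rw [← pow_add, ← pow_add, ← pow_add, ← pow_add]
      congr 1
      omega
    have h7 : ζ^(d*c1) = 1 := by rw [pow_mul, hζ.pow_eq_one, one_pow]
    have h8 : ζ^(l*d) = 1 := by rw [pow_mul', hζ.pow_eq_one, one_pow]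
    have h9 : ζ^(r*n^2) = 1 := by
      rw [show r*n^2 = d*(r*N*n) by rw [hn]; ring, pow_mul, hζ.pow_eq_one, one_pow]
    rw [h7, h8, h9, mul_one, mul_one] at h6
    exact h6
  -- assemble
  rw [hA, hC]
  have e1 : nd ζ d k * (∏ t ∈ range l, ((N+t+1 : ℕ):ℂ)) * (nd ζ d k * ∏ t ∈ range l, ((t+1 : ℕ):ℂ))⁻¹
      = (∏ t ∈ range l, ((N+t+1 : ℕ):ℂ)) * (∏ t ∈ range l, ((t+1 : ℕ):ℂ))⁻¹ := by
    rw [mul_inv, show nd ζ d k * (∏ t ∈ range l, ((N+t+1 : ℕ):ℂ)) * ((nd ζ d k)⁻¹ * (∏ t ∈ range l, ((t+1 : ℕ):ℂ))⁻¹)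
      = (∏ t ∈ range l, ((N+t+1 : ℕ):ℂ)) * (∏ t ∈ range l, ((t+1 : ℕ):ℂ))⁻¹ * (nd ζ d k * (nd ζ d k)⁻¹) by ring,
      mul_inv_cancel₀ ndne, mul_one]
  have e2 : (∏ i ∈ (range k).filter (fun i => ¬ d ∣ (i+1)), (-(ζ^(n-1-i))))
        * nd ζ d k * (∏ t ∈ range l, ((N-1-t : ℕ):ℂ)) * (nd ζ d k * ∏ t ∈ range l, ((t+1 : ℕ):ℂ))⁻¹
      = (∏ i ∈ (range k).filter (fun i => ¬ d ∣ (i+1)), (-(ζ^(n-1-i))))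
          * (∏ t ∈ range l, ((N-1-t : ℕ):ℂ)) * (∏ t ∈ range l, ((t+1 : ℕ):ℂ))⁻¹ := by
    rw [mul_inv, show (∏ i ∈ (range k).filter (fun i => ¬ d ∣ (i+1)), (-(ζ^(n-1-i))))
        * nd ζ d k * (∏ t ∈ range l, ((N-1-t : ℕ):ℂ)) * ((nd ζ d k)⁻¹ * (∏ t ∈ range l, ((t+1 : ℕ):ℂ))⁻¹)
      = (∏ i ∈ (range k).filter (fun i => ¬ d ∣ (i+1)), (-(ζ^(n-1-i))))
          * (∏ t ∈ range l, ((N-1-t : ℕ):ℂ)) * (∏ t ∈ range l, ((t+1 : ℕ):ℂ))⁻¹ * (nd ζ d k * (nd ζ d k)⁻¹) by ring,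
      mul_inv_cancel₀ ndne, mul_one]
  rw [e1, e2]
  rw [mul_pow, mul_pow, mul_pow, hneg, Acoef]
  rw [← inv_pow, ← inv_pow]
  linear_combination ((∏ t ∈ range l, ((N+t+1 : ℕ):ℂ))^(2*r) * (∏ t ∈ range l, ((N-1-t : ℕ):ℂ))^(2*r)
    * ((∏ t ∈ range l, ((t+1 : ℕ):ℂ))⁻¹)^(2*r) * ((∏ t ∈ range l, ((t+1 : ℕ):ℂ))⁻¹)^(2*r)) * hkey

lemma root_P (n r : ℕ) (hn : 0 < n) (hr : 0 < r) (ζ : ℂ) (hzn : ζ^n = 1) (hz1 : ζ ≠ 1) :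
    Polynomial.eval ζ ((∑ k ∈ range n,
        (X:Polynomial ℤ)^(r*(n-k)^2 + (r-1)*k) * gb (n+k) k ^ (2*r) * gb (n-1) k ^(2*r)).map
      (Int.castRingHom ℂ)) = 0 := by
  have hfin : orderOf ζ ∣ n := orderOf_dvd_of_pow_eq_one hzn
  set d := orderOf ζ with hdd
  have hd0 : 0 < d := by
    rcases Nat.eq_zero_or_pos d with h | h
    · rw [h, zero_dvd_iff] at hfin; omega
    · exact h
  have hd : 1 < d := by
    rcases Nat.lt_or_ge d 2 with h | h
    · have h1 : d = 1 := by omega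
      exact absurd (orderOf_eq_one_iff.mp h1) hz1
    · omega
  have hζ : IsPrimitiveRoot ζ d := IsPrimitiveRoot.orderOf ζ
  obtain ⟨N, hN⟩ := hfin
  have hN' : n = N*d := by rw [hN]; ring
  rw [Polynomial.map_sum, Polynomial.eval_finset_sum]
  have hterm : ∀ k ∈ range n,
      Polynomial.eval ζ (Polynomial.map (Int.castRingHom ℂ)
        ((X:Polynomial ℤ)^(r*(n-k)^2 + (r-1)*k) * gb (n+k) k ^ (2*r) * gb (n-1) k ^(2*r)))
      = Acoef N r (k/d) * (ζ^(k % d))⁻¹ := by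
    intro k hk
    rw [mem_range] at hk
    rw [Polynomial.map_mul, Polynomial.map_mul, Polynomial.map_pow, Polynomial.map_pow,
      Polynomial.map_pow, Polynomial.map_X, Polynomial.eval_mul, Polynomial.eval_mul,
      Polynomial.eval_pow, Polynomial.eval_pow, Polynomial.eval_pow, Polynomial.eval_X]
    have := term_eq ζ d N r k hd hζ hr (by omega : k < N*d)
    rw [← hN'] at this
    simp only [gbC] at this
    exact this
  rw [sum_congr rfl hterm]
  rw [hN', sum_block]
  have hinner : ∀ l ∈ range N,
      ∑ j ∈ range d, Acoef N r ((l*d+j)/d) * (ζ^((l*d+j) % d))⁻¹ = 0 := by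
    intro l _
    have hj : ∀ j ∈ range d, Acoef N r ((l*d+j)/d) * (ζ^((l*d+j) % d))⁻¹
        = Acoef N r l * (ζ⁻¹)^j := by
      intro j hjr
      rw [mem_range] at hjr
      have h1 : (l*d+j)/d = l := by
        rw [show l*d+j = d*l+j by ring, Nat.mul_add_div hd0, Nat.div_eq_of_lt hjr, add_zero]
      have h2 : (l*d+j) % d = j := by
        rw [show l*d+j = d*l+j by ring, Nat.mul_add_mod, Nat.mod_eq_of_lt hjr]
      rw [h1, h2, inv_pow]
    rw [sum_congr rfl hj, ← mul_sum, hζ.inv.geom_sum_eq_zero hd, mul_zero]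
  rw [sum_congr rfl hinner, sum_const, smul_zero]

lemma dvd_main (n r : ℕ) (hn : 0 < n) (hr : 0 < r) :
    (∑ i ∈ range n, (X:Polynomial ℤ)^i) ∣
      ∑ k ∈ range n, (X:Polynomial ℤ)^(r*(n-k)^2 + (r-1)*k) * gb (n+k) k ^ (2*r) * gb (n-1) k ^(2*r) := by
  rw [← Polynomial.map_dvd_map (Int.castRingHom ℂ) Int.cast_injective (monic_geom_sum_X hn.ne')]
  have hQ : (∑ i ∈ range n, (X:Polynomial ℤ)^i).map (Int.castRingHom ℂ)
      = ∑ i ∈ range n, (X:Polynomial ℂ)^i := by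
    simp [Polynomial.map_sum, Polynomial.map_pow]
  rw [hQ]
  have hζ₀ := Complex.isPrimitiveRoot_exp n hn.ne'
  have hfac := Polynomial.X_pow_sub_one_eq_prod hn hζ₀
  have h1mem : (1:ℂ) ∈ nthRootsFinset n (1:ℂ) := Polynomial.one_mem_nthRootsFinset hn
  rw [← Finset.mul_prod_erase _ _ h1mem] at hfac
  have hQprod : (∑ i ∈ range n, (X:Polynomial ℂ)^i)
      = ∏ z ∈ (nthRootsFinset n (1:ℂ)).erase 1, (X - C z) := by
    apply mul_left_cancel₀ (Polynomial.X_sub_C_ne_zero (1:ℂ))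
    calc (X - C 1) * (∑ i ∈ range n, (X:Polynomial ℂ)^i)
        = (∑ i ∈ range n, (X:Polynomial ℂ)^i) * (X - 1) := by rw [map_one]; ring
      _ = X^n - 1 := geom_sum_mul _ n
      _ = (X - C 1) * ∏ z ∈ (nthRootsFinset n (1:ℂ)).erase 1, (X - C z) := hfac
  rw [hQprod]
  apply Finset.prod_dvd_of_coprime
  · intro x _ y _ hxy
    exact Polynomial.pairwise_coprime_X_sub_C Function.injective_id hxy
  · intro z hz
    rw [Polynomial.dvd_iff_isRoot]
    have hmem := Finset.mem_erase.mp hz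
    have hpow : z^n = 1 := (Polynomial.mem_nthRootsFinset hn 1).mp hmem.2
    exact root_P n r hn hr z hpow hmem.1

/-- Equation (1.6): for positive integers `n` and `r`, the polynomial (in `ℤ[q]`)
`∑_{k=0}^{n-1} q^{r(n-k)²+(r-1)k} [n+k choose k]^{2r} [n-1 choose k]^{2r}`
is divisible by the `q`-integer `[n] = 1 + q + ⋯ + q^{n-1}`. -/
theorem sum_even_powers_div_qint (n r : ℕ) (hn : 0 < n) (hr : 0 < r) :
    ∃ f : Polynomial ℤ,
      (∑ k ∈ Finset.range n,
        q ^ ((r : ℤ) * ((n : ℤ) - (k : ℤ)) ^ 2 + ((r : ℤ) - 1) * (k : ℤ)) *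
          qbinom (n + k) k ^ (2 * r) * qbinom (n - 1) k ^ (2 * r))
      = algebraMap (Polynomial ℚ) (RatFunc ℚ)
          (Polynomial.map (Int.castRingHom ℚ)
            ((∑ i ∈ Finset.range n, Polynomial.X ^ i) * f)) := by
  classical
  set e : ℕ → ℕ := fun k => r*(n-k)^2 + (r-1)*k with he
  obtain ⟨f, hf⟩ := dvd_main n r hn hr
  refine ⟨f, ?_⟩
  have hterm : ∀ k ∈ Finset.range n,
      q ^ ((r : ℤ) * ((n : ℤ) - (k : ℤ)) ^ 2 + ((r : ℤ) - 1) * (k : ℤ)) *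
          qbinom (n + k) k ^ (2 * r) * qbinom (n - 1) k ^ (2 * r)
      = φ (Polynomial.map (Int.castRingHom ℚ)
            ((X:Polynomial ℤ)^(e k) * gb (n+k) k ^ (2*r) * gb (n-1) k ^(2*r))) := by
    intro k hk
    rw [Finset.mem_range] at hk
    have hcast : (((e k : ℕ)) : ℤ) = (r : ℤ) * ((n : ℤ) - (k : ℤ)) ^ 2 + ((r : ℤ) - 1) * (k : ℤ) := by
      rw [he]
      push_cast [Nat.cast_sub (by omega : k ≤ n), Nat.cast_sub (by omega : 1 ≤ r)]
      ring
    rw [← hcast, zpow_natCast]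
    have hq : q = φ (X : Polynomial ℚ) := (RatFunc.algebraMap_X).symm
    rw [hq, qbinom_eq (n+k) k (Nat.le_add_left k n), qbinom_eq (n-1) k (by omega)]
    rw [Polynomial.map_mul, Polynomial.map_mul, Polynomial.map_pow, Polynomial.map_pow,
      Polynomial.map_pow, Polynomial.map_X]
    rw [map_mul, map_mul, map_pow, map_pow, map_pow]
    rfl
  rw [Finset.sum_congr rfl hterm, ← map_sum, ← hf, ← Polynomial.map_sum]
  rfl
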